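/- (Emch's non-Markovian decay law, eq. (3.3.17), for the exponential Ising chain with ξ = 2) For N ≥ 1 let Λ_N = {−N, …, N} ⊆ ℤ, let J_N : Λ_N → Λ_N → ℝ be given by J_N x y = 2^{−|x−y|} for x ≠ y and J_N x x = 0, let H_N = (1/2)·∑_{x,y∈Λ_N} J_N x y · σₓ³ σ_y³, and let ρ_N be the product state on Λ_N with entries ρ_N(f,g) = ∏_{x∈Λ_N} Q(f x, g x), where Q = [[1/2,1/2],[1/2,1/2]]. Then for every real t ≠ 0: lim_{N→∞} Tr(ρ_N · exp(itH_N) σ₀¹ exp(−itH_N)) = (sin(2t)/(2t))². -/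

import Mathlib

open Matrix Complex Filter

noncomputable section

/-- The three Pauli matrices `σ¹, σ², σ³` (indexed by `Fin 3` as `0, 1, 2`). -/
def pauli : Fin 3 → Matrix (Fin 2) (Fin 2) ℂ :=
  ![!![0, 1; 1, 0], !![0, -I; I, 0], !![1, 0; 0, -1]]

/-- The Pauli operator `σₓᵏ` acting at the site `x` of the finite lattice `Λ`, as a matrix
indexed by spin configurations `Λ → Fin 2`. -/
def pauliAt {Λ : Type*} [Fintype Λ] [DecidableEq Λ] (x : Λ) (k : Fin 3) :
    Matrix (Λ → Fin 2) (Λ → Fin 2) ℂ :=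
  fun f g => if ∀ y, y ≠ x → f y = g y then pauli k (f x) (g x) else 0

/-- The generalized Ising model Hamiltonian `H = (1/2) ∑_{x,y ∈ Λ} J x y · σₓ³ σ_y³`. -/
def gImHamiltonian {Λ : Type*} [Fintype Λ] [DecidableEq Λ] (J : Λ → Λ → ℝ) :
    Matrix (Λ → Fin 2) (Λ → Fin 2) ℂ :=
  (2 : ℂ)⁻¹ • ∑ x : Λ, ∑ y : Λ, (J x y : ℂ) • (pauliAt x 2 * pauliAt y 2)

/-- The lattice `Λ_N = {-N, …, N} ⊆ ℤ`. -/
abbrev siteN (N : ℕ) : Type := {x : ℤ // x ∈ Finset.Icc (-(N : ℤ)) (N : ℤ)}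

/-- The exponential (`ξ = 2`) Ising couplings `J_N x y = 2^{-|x-y|}` (`x ≠ y`), `J_N x x = 0`. -/
def Jexp (N : ℕ) : siteN N → siteN N → ℝ :=
  fun x y => if x.1 = y.1 then 0 else (2 : ℝ) ^ (-|x.1 - y.1|)

/-- The rank-one projection `Q = [[1/2,1/2],[1/2,1/2]]` onto the `+1` eigenvector of `σ¹`. -/
def Qplus : Matrix (Fin 2) (Fin 2) ℂ := !![1/2, 1/2; 1/2, 1/2]

/-- The product state `ρ_N = ⊗_{x ∈ Λ_N} P_x^{+,1}` on the lattice `Λ_N`. -/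
def rhoN (N : ℕ) : Matrix (siteN N → Fin 2) (siteN N → Fin 2) ℂ :=
  Matrix.of fun f g => ∏ x : siteN N, Qplus (f x) (g x)

/-- The origin `0 ∈ Λ_N`. -/
def site0 (N : ℕ) : siteN N := ⟨0, by simp [Finset.mem_Icc]⟩

/-! In the σ³-basis the Hamiltonian is diagonal, with eigenvalue the classical Ising energy `E`
of the configuration, and `σ₀¹` flips the spin at the origin. Every entry of `ρ` equals
`2^{-|Λ|}`, so the expectation is `2^{-|Λ|} ∑_f exp(it(E f - E(flip₀ f)))`. The energy difference
is `s₀ ∑_{y ≠ 0} (J 0 y + J y 0) s_y`, so the sum factorises into `∏_{y ≠ 0} cos(t (J 0 y + J y 0))`,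
which for the exponential chain is `(∏_{k=1}^N cos(2t/2^k))²`. Viète's identity
`sinc x = sinc(x/2^N) ∏_{k=1}^N cos(x/2^k)` then gives the limit `sinc(2t)²`. -/

lemma Real.sinc_two_mul (x : ℝ) : Real.sinc (2 * x) = Real.sinc x * Real.cos x := by
  rcases eq_or_ne x 0 with rfl | hx
  · simp
  · rw [Real.sinc_of_ne_zero hx, Real.sinc_of_ne_zero (by positivity), Real.sin_two_mul]
    field_simp

lemma Real.sinc_eq_sinc_div_two_pow_mul_prod_cos (x : ℝ) (N : ℕ) :
    Real.sinc x = Real.sinc (x / 2 ^ N) * ∏ k ∈ Finset.range N, Real.cos (x / 2 ^ (k + 1)) := by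
  induction N with
  | zero => simp
  | succ N ih =>
    have hhalf : x / 2 ^ N = 2 * (x / 2 ^ (N + 1)) := by
      rw [pow_succ]
      field_simp
    rw [Finset.prod_range_succ, ih, hhalf, Real.sinc_two_mul]
    ring

lemma Real.tendsto_prod_cos_div_two_pow (x : ℝ) :
    Tendsto (fun N : ℕ => ∏ k ∈ Finset.range N, Real.cos (x / 2 ^ (k + 1))) atTop
      (nhds (Real.sinc x)) := by
  have hsinc : Tendsto (fun N : ℕ => Real.sinc (x / 2 ^ N)) atTop (nhds 1) := by
    rw [← Real.sinc_zero]
    exact (Real.continuous_sinc.tendsto 0).comp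
      (tendsto_const_nhds.div_atTop (tendsto_pow_atTop_atTop_of_one_lt one_lt_two))
  have hquot := (tendsto_const_nhds (x := Real.sinc x)).div hsinc one_ne_zero
  rw [div_one] at hquot
  refine hquot.congr' ?_
  filter_upwards [hsinc.eventually_ne one_ne_zero] with N hN
  rw [Pi.div_apply, div_eq_iff hN, mul_comm, ← Real.sinc_eq_sinc_div_two_pow_mul_prod_cos]

lemma Finset.prod_Icc_neg_erase_zero_of_even {M : Type*} [CommMonoid M] (F : ℤ → M)
    (hF : ∀ x, F (-x) = F x) (N : ℕ) :
    ∏ x ∈ (Finset.Icc (-(N : ℤ)) N).erase 0, F x = ∏ k ∈ Finset.range N, F (k + 1) ^ 2 := by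
  induction N with
  | zero => simp
  | succ N ih =>
    have hsplit : (Finset.Icc (-((N + 1 : ℕ) : ℤ)) (N + 1 : ℕ)).erase 0 =
        insert (-((N : ℤ) + 1)) (insert ((N : ℤ) + 1) ((Finset.Icc (-(N : ℤ)) N).erase 0)) := by
      ext x
      simp only [Finset.mem_erase, Finset.mem_Icc, Finset.mem_insert]
      omega
    have hnotin : -((N : ℤ) + 1) ∉ insert ((N : ℤ) + 1) ((Finset.Icc (-(N : ℤ)) N).erase 0) := by
      simp only [Finset.mem_insert, Finset.mem_erase, Finset.mem_Icc]
      omega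
    rw [hsplit, Finset.prod_insert hnotin, Finset.prod_insert (by simp), ih,
      Finset.prod_range_succ, hF, sq]
    ac_rfl

def spin : Fin 2 → ℝ := ![1, -1]

@[simp] lemma spin_zero : spin 0 = 1 := rfl

@[simp] lemma spin_one : spin 1 = -1 := rfl

lemma spin_add_one (a : Fin 2) : spin (a + 1) = -spin a := by
  fin_cases a <;> simp [spin]

lemma cos_spin_mul (a : Fin 2) (θ : ℝ) : Real.cos (spin a * θ) = Real.cos θ := by
  fin_cases a <;> simp [spin]

lemma sum_cexp_spin {ι : Type*} [Fintype ι] [DecidableEq ι] (θ : ι → ℝ) :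
    ∑ h : ι → Fin 2, cexp (I * ∑ j, (θ j * spin (h j) : ℝ)) = ∏ j, 2 * (Real.cos (θ j) : ℂ) := by
  push_cast
  simp_rw [Finset.mul_sum, Complex.exp_sum]
  rw [← Fintype.prod_sum (fun j a => cexp (I * (θ j * spin a)))]
  refine Finset.prod_congr rfl fun j _ => ?_
  simp only [Fin.sum_univ_two, spin_zero, spin_one, Complex.cos]
  push_cast
  ring_nf

lemma pauli_zero_apply (a b : Fin 2) : pauli 0 a b = if b = a + 1 then 1 else 0 := by
  fin_cases a <;> fin_cases b <;> simp [pauli]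

lemma pauli_two_apply (a b : Fin 2) : pauli 2 a b = if a = b then (spin a : ℂ) else 0 := by
  fin_cases a <;> fin_cases b <;> simp [pauli]

lemma Qplus_apply (a b : Fin 2) : Qplus a b = 2⁻¹ := by
  fin_cases a <;> fin_cases b <;> simp [Qplus]

section Lattice

variable {Λ : Type*} [Fintype Λ]

def productState (Q : Matrix (Fin 2) (Fin 2) ℂ) : Matrix (Λ → Fin 2) (Λ → Fin 2) ℂ :=
  of fun f g => ∏ x, Q (f x) (g x)

lemma productState_Qplus_apply (f g : Λ → Fin 2) :
    productState Qplus f g = ∏ _x : Λ, (2⁻¹ : ℂ) := by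
  simp [productState, Qplus_apply]

variable [DecidableEq Λ]

def spinFlip (x : Λ) (f : Λ → Fin 2) : Λ → Fin 2 := Function.update f x (f x + 1)

omit [Fintype Λ] in
lemma spin_comp_spinFlip (x : Λ) (f : Λ → Fin 2) :
    spin ∘ spinFlip x f = Function.update (spin ∘ f) x (-spin (f x)) := by
  rw [spinFlip, Function.comp_update, spin_add_one]

lemma pauliAt_two (x : Λ) : pauliAt x 2 = diagonal fun f => (spin (f x) : ℂ) := by
  ext f g
  rw [pauliAt, pauli_two_apply, diagonal_apply, ← ite_and]
  congr 1
  rw [← Function.update_eq_self x f, Function.update_eq_iff, Function.update_eq_self]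
  grind

lemma pauliAt_zero_apply (x : Λ) (g f : Λ → Fin 2) :
    pauliAt x 0 g f = if f = spinFlip x g then 1 else 0 := by
  rw [pauliAt, pauli_zero_apply, ← ite_and, spinFlip]
  exact if_congr (by rw [Function.eq_update_iff]; aesop) rfl rfl

def isingEnergy (J : Λ → Λ → ℝ) (σ : Λ → ℝ) : ℝ := 2⁻¹ * ∑ x, ∑ y, J x y * σ x * σ y

lemma gImHamiltonian_eq_diagonal (J : Λ → Λ → ℝ) :
    gImHamiltonian J = diagonal fun f => (isingEnergy J (spin ∘ f) : ℂ) := by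
  ext f g
  by_cases hfg : f = g
  · subst hfg
    simp [gImHamiltonian, isingEnergy, pauliAt_two, Matrix.sum_apply, Finset.mul_sum, mul_assoc]
  · simp [gImHamiltonian, pauliAt_two, Matrix.sum_apply, hfg]

lemma sum_sum_mul_mul_split_at (J : Λ → Λ → ℝ) (σ : Λ → ℝ) (x₀ : Λ) :
    ∑ x, ∑ y, J x y * σ x * σ y = J x₀ x₀ * σ x₀ * σ x₀
      + σ x₀ * ∑ y : {y // y ≠ x₀}, (J x₀ y + J y x₀) * σ y
      + ∑ x : {x // x ≠ x₀}, ∑ y : {y // y ≠ x₀}, J x y * σ x * σ y := by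
  simp only [Fintype.sum_eq_add_sum_subtype_ne _ x₀, Finset.sum_add_distrib, Finset.mul_sum,
    add_mul, mul_add]
  ring_nf

lemma isingEnergy_sub_update_neg (J : Λ → Λ → ℝ) (σ : Λ → ℝ) (x₀ : Λ) :
    isingEnergy J σ - isingEnergy J (Function.update σ x₀ (-σ x₀)) =
      σ x₀ * ∑ y : {y // y ≠ x₀}, (J x₀ y + J y x₀) * σ y := by
  have hσ (y : {y // y ≠ x₀}) : Function.update σ x₀ (-σ x₀) y = σ y :=
    Function.update_of_ne y.2 _ _
  simp only [isingEnergy, sum_sum_mul_mul_split_at J _ x₀, Function.update_self, hσ]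
  ring

lemma sum_cexp_spin_mul_sum_spin (x₀ : Λ) (θ : {y // y ≠ x₀} → ℝ) :
    ∑ g : Λ → Fin 2, cexp (I * (spin (g x₀) * ∑ y, θ y * spin (g y) : ℝ)) =
      2 * ∏ y, 2 * (Real.cos (θ y) : ℂ) := by
  rw [← (Equiv.funSplitAt x₀ (Fin 2)).symm.sum_comp, Fintype.sum_prod_type]
  simp_rw [Finset.mul_sum, ← mul_assoc]
  have hsplit_self (a : Fin 2) (h : {y // y ≠ x₀} → Fin 2) :
      (Equiv.funSplitAt x₀ (Fin 2)).symm (a, h) x₀ = a := by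
    simp [Equiv.funSplitAt_symm_apply]
  have hsplit_ne (a : Fin 2) (h : {y // y ≠ x₀} → Fin 2) (y : {y // y ≠ x₀}) :
      (Equiv.funSplitAt x₀ (Fin 2)).symm (a, h) y = h y := by
    simp [Equiv.funSplitAt_symm_apply, y.2]
  simp only [hsplit_self, hsplit_ne, sum_cexp_spin, cos_spin_mul, Fin.sum_univ_two]
  ring

lemma sum_diagonal_mul_pauliAt_zero_mul_diagonal_apply (x : Λ) (d₁ d₂ : (Λ → Fin 2) → ℂ)
    (g : Λ → Fin 2) :
    ∑ f, (diagonal d₁ * pauliAt x 0 * diagonal d₂) g f = d₁ g * d₂ (spinFlip x g) := by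
  simp [mul_diagonal, diagonal_mul, pauliAt_zero_apply]

lemma exp_smul_diagonal {m : Type*} [Fintype m] [DecidableEq m] (c : ℂ) (v : m → ℂ) :
    NormedSpace.exp (c • diagonal v) = diagonal fun i => cexp (c * v i) := by
  rw [← diagonal_smul, exp_diagonal]
  congr 1
  ext i
  simp [Complex.exp_eq_exp_ℂ]

lemma trace_productState_Qplus_mul (A : Matrix (Λ → Fin 2) (Λ → Fin 2) ℂ) :
    (productState Qplus * A).trace = (∏ _x : Λ, (2⁻¹ : ℂ)) * ∑ g, ∑ f, A g f := by
  simp only [trace, diag_apply, mul_apply, productState_Qplus_apply, ← Finset.mul_sum]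
  rw [Finset.sum_comm]

lemma trace_productState_mul_conj_pauliAt_zero (J : Λ → Λ → ℝ) (x₀ : Λ) (t : ℝ) :
    (productState Qplus * (NormedSpace.exp ((I * t) • gImHamiltonian J) * pauliAt x₀ 0 *
      NormedSpace.exp ((-(I * t)) • gImHamiltonian J))).trace =
      ∏ y : {y // y ≠ x₀}, (Real.cos (t * (J x₀ y + J y x₀)) : ℂ) := by
  have hphase (g : Λ → Fin 2) :
      cexp (I * t * isingEnergy J (spin ∘ g)) *
        cexp (-(I * t) * isingEnergy J (spin ∘ spinFlip x₀ g)) =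
      cexp (I * (spin (g x₀) * ∑ y : {y // y ≠ x₀}, t * (J x₀ y + J y x₀) * spin (g y) : ℝ)) := by
    have hsub := congrArg Complex.ofReal (isingEnergy_sub_update_neg J (spin ∘ g) x₀)
    rw [← Complex.exp_add, spin_comp_spinFlip]
    congr 1
    push_cast at hsub ⊢
    simp only [Function.comp_apply, mul_assoc, ← Finset.mul_sum] at hsub ⊢
    linear_combination (I * t) * hsub
  rw [trace_productState_Qplus_mul, gImHamiltonian_eq_diagonal, exp_smul_diagonal,
    exp_smul_diagonal]
  simp only [sum_diagonal_mul_pauliAt_zero_mul_diagonal_apply, hphase, sum_cexp_spin_mul_sum_spin,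
    Fintype.prod_eq_mul_prod_subtype_ne _ x₀, Finset.prod_mul_distrib]
  rw [Finset.prod_const, Finset.prod_const, inv_pow]
  field_simp

end Lattice

lemma prod_ne_site0 {M : Type*} [CommMonoid M] (N : ℕ) (F : ℤ → M) :
    ∏ y : {y : siteN N // y ≠ site0 N}, F y.1.1 = ∏ x ∈ (Finset.Icc (-(N : ℤ)) N).erase 0, F x := by
  rw [← Finset.prod_subtype (Finset.univ.erase (site0 N)) (by simp) (fun y => F y.1),
    Finset.univ_eq_attach, Finset.prod_erase_attach]
  rfl

lemma Jexp_site0_add (N : ℕ) (y : siteN N) (hy : y ≠ site0 N) :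
    Jexp N (site0 N) y + Jexp N y (site0 N) = 2 * 2 ^ (-|y.1|) := by
  have hy' : y.1 ≠ 0 := fun h => hy (Subtype.ext h)
  simp [Jexp, site0, hy', Ne.symm hy']
  ring

lemma trace_rhoN_mul_conj_pauliAt_site0 (N : ℕ) (t : ℝ) :
    (rhoN N * (NormedSpace.exp ((I * t) • gImHamiltonian (Jexp N)) * pauliAt (site0 N) 0 *
      NormedSpace.exp ((-(I * t)) • gImHamiltonian (Jexp N)))).trace =
      (((∏ k ∈ Finset.range N, Real.cos (2 * t / 2 ^ (k + 1))) ^ 2 : ℝ) : ℂ) := by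
  set F : ℤ → ℝ := fun x => Real.cos (t * (2 * 2 ^ (-|x|)))
  have hF : ∀ y : {y : siteN N // y ≠ site0 N},
      Real.cos (t * (Jexp N (site0 N) y + Jexp N y (site0 N))) = F y.1.1 := fun y => by
    rw [Jexp_site0_add N y y.2]
  have hF_succ (k : ℕ) : F (k + 1) = Real.cos (2 * t / 2 ^ (k + 1)) := by
    have hk : |(k : ℤ) + 1| = ((k + 1 : ℕ) : ℤ) := by push_cast; exact abs_of_nonneg (by positivity)
    simp only [F, hk, _root_.zpow_neg, zpow_natCast]
    ring_nf
  rw [show rhoN N = productState Qplus from rfl, trace_productState_mul_conj_pauliAt_zero,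
    ← Complex.ofReal_prod, Finset.prod_congr rfl fun y _ => hF y, prod_ne_site0,
    Finset.prod_Icc_neg_erase_zero_of_even F (fun x => by simp [F]), Finset.prod_pow]
  simp only [hF_succ]

/-- **Emch's non-Markovian decay law (eq. (3.3.17)) for the exponential Ising chain with
`ξ = 2`.**  For every `t ≠ 0`, `Tr(ρ_N e^{itH_N} σ₀¹ e^{-itH_N}) → (sin(2t)/(2t))²` as
`N → ∞`. -/
theorem emch_free_induction_decay (t : ℝ) (ht : t ≠ 0) :
    Tendsto
      (fun N : ℕ =>
        (rhoN N *
          (NormedSpace.exp ((I * t) • gImHamiltonian (Jexp N)) * pauliAt (site0 N) 0 *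
            NormedSpace.exp ((-(I * t)) • gImHamiltonian (Jexp N)))).trace)
      atTop (nhds (((Real.sin (2 * t) / (2 * t) : ℝ) : ℂ) ^ 2)) := by
  simp only [trace_rhoN_mul_conj_pauliAt_site0]
  rw [← Real.sinc_of_ne_zero (mul_ne_zero two_ne_zero ht), ← Complex.ofReal_pow]
  exact ((Real.tendsto_prod_cos_div_two_pow (2 * t)).pow 2).ofReal

end
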